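/- Let K be a field, let u, v ∈ K, let g ≥ 2 be an integer, and let a, b, c, d ∈ K be nonzero and pairwise distinct. Then the coefficient of x^{2g−3} in the formal power series (1+ux)^g (1+vx)^g (1−ax)^{−1} (1−bx)^{−1} (1−cx)^{−1} (1−dx)^{−1} ∈ K[[x]] equals (a+u)^g (a+v)^g /((a−b)(a−c)(a−d)) + (b+u)^g (b+v)^g /((b−a)(b−c)(b−d)) + (c+u)^g (c+v)^g /((c−a)(c−b)(c−d)) + (d+u)^g (d+v)^g /((d−a)(d−b)(d−c)). -/

import Mathlib

/-!
Partial fractions: for a finite set `s` of distinct nodes, the coefficient of `T ^ k` in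
`∏ x ∈ s, (1 - x T)⁻¹` is the divided difference `∑ x ∈ s, x ^ m / ∏ y ∈ s \ {x}, (x - y)` with
`m = k + #s - 1`, and by Lagrange interpolation this divided difference vanishes for `m < #s - 1`.
Hence, when `deg P ≤ N := n + #s - 1`, the coefficient of `T ^ n` in `P(T) ∏ x ∈ s, (1 - x T)⁻¹`
is the divided difference of the reversed polynomial `t ^ N P(1/t)`: the terms of `P` of degree
above `n`, which do not reach `T ^ n`, contribute zero anyway. For `P = (1 + uT)^g (1 + vT)^g`,
`n = 2g - 3` and four nodes, `N = 2g` and the reversed polynomial is `(t + u)^g (t + v)^g`.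
-/

open Finset Polynomial

section Reflect

variable {R : Type*}

theorem eval_reflect_of_natDegree_le [CommSemiring R] {P : R[X]} {N : ℕ} (hP : P.natDegree ≤ N)
    (x : R) : (reflect N P).eval x = ∑ m ∈ range (N + 1), P.coeff m * x ^ (N - m) := by
  rw [eval_eq_sum_range' (Nat.lt_succ_of_le (natDegree_reflect_le.trans (max_le le_rfl hP))),
    ← sum_range_reflect]
  refine sum_congr rfl fun m hm => ?_
  have hm := mem_range.1 hm
  rw [coeff_reflect, revAt_le (by omega)]
  congr 2
  omega

theorem reflect_pow [Semiring R] {p : R[X]} {N : ℕ} (hp : p.natDegree ≤ N) (g : ℕ) :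
    reflect (g * N) (p ^ g) = reflect N p ^ g := by
  induction g with
  | zero => simp
  | succ g ih =>
    rw [pow_succ, pow_succ, Nat.succ_mul, reflect_mul _ _ (natDegree_pow_le_of_le g hp) hp, ih]

theorem reflect_one_add_C_mul_X [Semiring R] (u : R) : reflect 1 (1 + C u * X) = X + C u := by
  simp [reflect_add, reflect_one, reflect_C_mul]

end Reflect

theorem PowerSeries.mk_eq_mul_inv_one_sub_C_mul_X {K : Type*} [Field K] {f : ℕ → K}
    {ψ : PowerSeries K} {a : K} (h_zero : f 0 = PowerSeries.coeff 0 ψ)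
    (h_succ : ∀ k, f (k + 1) = a * f k + PowerSeries.coeff (k + 1) ψ) :
    PowerSeries.mk f = ψ * (1 - PowerSeries.C a * PowerSeries.X)⁻¹ := by
  rw [PowerSeries.eq_mul_inv_iff_mul_eq (by simp)]
  ext (_ | k)
  · simp [h_zero]
  · rw [mul_sub, mul_one, map_sub, ← mul_assoc, PowerSeries.coeff_succ_mul_X,
      PowerSeries.coeff_mul_C, PowerSeries.coeff_mk, PowerSeries.coeff_mk, h_succ]
    ring

section DividedDifference

variable {K : Type*} [Field K] [DecidableEq K]

def dividedDifferencePow (s : Finset K) (m : ℕ) : K :=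
  ∑ x ∈ s, x ^ m / ∏ y ∈ s.erase x, (x - y)

theorem dividedDifferencePow_of_lt {s : Finset K} {m : ℕ} (hm : m < #s) :
    dividedDifferencePow s m = if m = #s - 1 then 1 else 0 := by
  have h := Lagrange.coeff_eq_sum (s := s) (v := id) (Set.injOn_id _) (P := (X : K[X]) ^ m)
    (by rw [degree_X_pow]; exact_mod_cast hm)
  simp only [coeff_X_pow, eval_pow, eval_X, id] at h
  rw [dividedDifferencePow, ← h]
  exact if_congr eq_comm rfl rfl

theorem dividedDifferencePow_insert_succ {s : Finset K} {a : K} (ha : a ∉ s) (m : ℕ) :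
    dividedDifferencePow (insert a s) (m + 1) =
      a * dividedDifferencePow (insert a s) m + dividedDifferencePow s m := by
  rw [← sub_eq_iff_eq_add', dividedDifferencePow, dividedDifferencePow, mul_sum,
    ← sum_sub_distrib, sum_insert ha, pow_succ, ← mul_div_assoc, mul_comm a, sub_self, zero_add,
    dividedDifferencePow]
  refine sum_congr rfl fun x hx => ?_
  have hxa : x ≠ a := ne_of_mem_of_not_mem hx ha
  rw [erase_insert_of_ne hxa.symm, prod_insert fun h => ha (mem_of_mem_erase h)]
  field_simp [sub_ne_zero.2 hxa]
  ring

theorem prod_inv_one_sub_C_mul_X_eq_mk {s : Finset K} (hs : s.Nonempty) :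
    ∏ x ∈ s, (1 - PowerSeries.C x * PowerSeries.X)⁻¹ =
      PowerSeries.mk fun k => dividedDifferencePow s (k + #s - 1) := by
  induction hs using Finset.Nonempty.cons_induction with
  | singleton a =>
    rw [prod_singleton, ← one_mul (1 - _)⁻¹]
    refine (PowerSeries.mk_eq_mul_inv_one_sub_C_mul_X ?_ fun k => ?_).symm <;>
      simp [dividedDifferencePow, pow_succ, mul_comm]
  | cons a s ha hs ih =>
    obtain ⟨t, ht⟩ : ∃ t, #s = t + 1 := Nat.exists_eq_add_one.2 hs.card_pos
    rw [prod_cons, ih, mul_comm, card_cons, cons_eq_insert]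
    refine (PowerSeries.mk_eq_mul_inv_one_sub_C_mul_X ?_ fun k => ?_).symm
    · rw [PowerSeries.coeff_mk, ht, show 0 + (t + 1 + 1) - 1 = t + 1 by omega,
        dividedDifferencePow_insert_succ ha, dividedDifferencePow_of_lt (by simp [ha, ht]),
        if_neg (by simp [ha, ht]), mul_zero, zero_add, zero_add, Nat.add_sub_cancel]
    · rw [PowerSeries.coeff_mk, show k + 1 + (#s + 1) - 1 = k + #s + 1 by omega,
        dividedDifferencePow_insert_succ ha, show k + (#s + 1) - 1 = k + #s by omega,
        show k + 1 + #s - 1 = k + #s by omega]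

theorem coeff_mul_prod_inv_one_sub_C_mul_X {s : Finset K} (hs : s.Nonempty) {P : K[X]} {n : ℕ}
    (hP : P.natDegree ≤ n + #s - 1) :
    PowerSeries.coeff n ((P : PowerSeries K) * ∏ x ∈ s, (1 - PowerSeries.C x * PowerSeries.X)⁻¹) =
      ∑ x ∈ s, (reflect (n + #s - 1) P).eval x / ∏ y ∈ s.erase x, (x - y) := by
  set N := n + #s - 1
  have h_high : ∀ m ∈ range (N + 1), m ∉ range (n + 1) →
      P.coeff m * dividedDifferencePow s (N - m) = 0 := by
    intro m hm hmn
    rw [mem_range] at hm hmn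
    rw [dividedDifferencePow_of_lt (by omega), if_neg (by omega), mul_zero]
  calc PowerSeries.coeff n ((P : PowerSeries K) *
        ∏ x ∈ s, (1 - PowerSeries.C x * PowerSeries.X)⁻¹)
      = ∑ m ∈ range (n + 1), P.coeff m * dividedDifferencePow s (N - m) := by
        rw [prod_inv_one_sub_C_mul_X_eq_mk hs, PowerSeries.coeff_mul,
          Nat.sum_antidiagonal_eq_sum_range_succ_mk]
        refine sum_congr rfl fun m hm => ?_
        rw [mem_range] at hm
        rw [Polynomial.coeff_coe, PowerSeries.coeff_mk]
        congr 2
        omega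
    _ = ∑ m ∈ range (N + 1), P.coeff m * dividedDifferencePow s (N - m) :=
        sum_subset (range_subset_range.2 (by have := hs.card_pos; omega)) h_high
    _ = ∑ x ∈ s, (reflect N P).eval x / ∏ y ∈ s.erase x, (x - y) := by
        simp_rw [eval_reflect_of_natDegree_le hP, dividedDifferencePow, mul_sum, sum_div]
        rw [sum_comm]
        simp_rw [mul_div_assoc]

end DividedDifference

theorem coeff_two_g_sub_three_eq_residue_sum_general
    (K : Type*) [Field K] (u v : K) (g : ℕ) (hg : 2 ≤ g)
    (a b c d : K)
    (hab : a ≠ b) (hac : a ≠ c) (had : a ≠ d)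
    (hbc : b ≠ c) (hbd : b ≠ d) (hcd : c ≠ d) :
    PowerSeries.coeff (2 * g - 3)
      ((1 + PowerSeries.C u * PowerSeries.X) ^ g *
        (1 + PowerSeries.C v * PowerSeries.X) ^ g *
        (1 - PowerSeries.C a * PowerSeries.X)⁻¹ *
        (1 - PowerSeries.C b * PowerSeries.X)⁻¹ *
        (1 - PowerSeries.C c * PowerSeries.X)⁻¹ *
        (1 - PowerSeries.C d * PowerSeries.X)⁻¹) =
      (a + u) ^ g * (a + v) ^ g / ((a - b) * (a - c) * (a - d)) +
      (b + u) ^ g * (b + v) ^ g / ((b - a) * (b - c) * (b - d)) +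
      (c + u) ^ g * (c + v) ^ g / ((c - a) * (c - b) * (c - d)) +
      (d + u) ^ g * (d + v) ^ g / ((d - a) * (d - b) * (d - c)) := by
  classical
  have hcard : #({a, b, c, d} : Finset K) = 4 := by
    simp [card_insert_of_notMem, hab, hac, had, hbc, hbd, hcd]
  have hN : 2 * g - 3 + #({a, b, c, d} : Finset K) - 1 = g * 1 + g * 1 := by omega
  have h_linear : ∀ w : K, (1 + C w * X).natDegree ≤ 1 := fun w => by
    simpa [add_comm] using natDegree_linear_le (a := w) (b := (1 : K))
  have hu := natDegree_pow_le_of_le g (h_linear u)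
  have hv := natDegree_pow_le_of_le g (h_linear v)
  have key := coeff_mul_prod_inv_one_sub_C_mul_X (insert_nonempty a {b, c, d})
    (hN ▸ natDegree_mul_le_of_le hu hv)
  rw [hN, reflect_mul _ _ hu hv, reflect_pow (h_linear u), reflect_pow (h_linear v),
    reflect_one_add_C_mul_X, reflect_one_add_C_mul_X] at key
  convert key using 1
  · simp [prod_insert, hab, hac, had, hbc, hbd, hcd, mul_assoc]
  · simp [sum_insert, prod_insert, erase_insert_of_ne, hab, hac, had, hbc, hbd, hcd, mul_assoc,
      add_assoc]

/-- Closed-form evaluation of the coefficient of `x^(2g-3)` in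
`(1+ux)^g (1+vx)^g (1-ax)⁻¹ (1-bx)⁻¹ (1-cx)⁻¹ (1-dx)⁻¹ ∈ K⟦x⟧`
(the residue `F₂(a,b,c,d)` of the paper). -/
theorem coeff_two_g_sub_three_eq_residue_sum
    (K : Type*) [Field K] (u v : K) (g : ℕ) (hg : 2 ≤ g)
    (a b c d : K) (ha : a ≠ 0) (hb : b ≠ 0) (hc : c ≠ 0) (hd : d ≠ 0)
    (hab : a ≠ b) (hac : a ≠ c) (had : a ≠ d)
    (hbc : b ≠ c) (hbd : b ≠ d) (hcd : c ≠ d) :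
    PowerSeries.coeff (2 * g - 3)
      ((1 + PowerSeries.C u * PowerSeries.X) ^ g *
        (1 + PowerSeries.C v * PowerSeries.X) ^ g *
        (1 - PowerSeries.C a * PowerSeries.X)⁻¹ *
        (1 - PowerSeries.C b * PowerSeries.X)⁻¹ *
        (1 - PowerSeries.C c * PowerSeries.X)⁻¹ *
        (1 - PowerSeries.C d * PowerSeries.X)⁻¹) =
      (a + u) ^ g * (a + v) ^ g / ((a - b) * (a - c) * (a - d)) +
      (b + u) ^ g * (b + v) ^ g / ((b - a) * (b - c) * (b - d)) +
      (c + u) ^ g * (c + v) ^ g / ((c - a) * (c - b) * (c - d)) +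
      (d + u) ^ g * (d + v) ^ g / ((d - a) * (d - b) * (d - c)) :=
  coeff_two_g_sub_three_eq_residue_sum_general K u v g hg a b c d hab hac had hbc hbd hcd
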